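/- For insertion-removal attacks, the indistinguishability relation equals a kernel: for any α_i, α_j ⊆ Δ and α := α_i ∪ α_j, the relation R_{A_{α_i}, A_{α_j}} := {(w, w') ∈ Σ*×Σ* : A_{α_i}P(w) ∩ A_{α_j}P(w') ≠ ∅} equals ker(R_{¬α} ∘ P) := {(w, w') : R_{¬α}(P(w)) = R_{¬α}(P(w'))}. -/
import Mathlib


variable {S D : Type*} [DecidableEq D]

/-- `P : Σ* → Δ*` is an observation map. -/
def IsObsMap (P : List S → List D) : Prop :=
  P [] = [] ∧ (∀ w s : List S, P (w ++ s) = P w ++ P s) ∧ ∀ σ : S, (P [σ]).length ≤ 1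

/-- The `α`-removal map `R_{¬α}` erases all symbols in `α`. -/
def Rrem (α : Finset D) (v : List D) : List D := v.filter (fun t => decide (t ∉ α))

/-- The insertion-removal attack `A_α(u) = {v : R_{¬α}(u) = R_{¬α}(v)}`. -/
def Ains (α : Finset D) (u : List D) : Set (List D) := {v | Rrem α u = Rrem α v}

private lemma rrem_nil (α : Finset D) : Rrem α ([] : List D) = [] := rfl

private lemma rrem_cons_mem {α : Finset D} {x : D} (h : x ∈ α) (v : List D) :
    Rrem α (x :: v) = Rrem α v := by simp [Rrem, List.filter_cons, h]

private lemma rrem_cons_not {α : Finset D} {x : D} (h : x ∉ α) (v : List D) :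
    Rrem α (x :: v) = x :: Rrem α v := by simp [Rrem, List.filter_cons, h]

private lemma rrem_rrem {α β : Finset D} (h : β ⊆ α) (v : List D) :
    Rrem α (Rrem β v) = Rrem α v := by
  induction v with
  | nil => rfl
  | cons x v ih =>
    by_cases hb : x ∈ β
    · rw [rrem_cons_mem hb, rrem_cons_mem (h hb), ih]
    · by_cases ha : x ∈ α
      · rw [rrem_cons_not hb, rrem_cons_mem ha, rrem_cons_mem ha, ih]
      · rw [rrem_cons_not hb, rrem_cons_not ha, rrem_cons_not ha, ih]

/-- Merge witness: interleaves the `¬αj`-material of `ys` with the `¬αi`-material of `xs`. -/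
private def goMerge (αi αj : Finset D) : List D → List D → List D
  | [], ys => ys.filter (fun y => decide (y ∉ αj))
  | x :: xs, ys =>
    if x ∈ αi then goMerge αi αj xs ys
    else if x ∈ αj then x :: goMerge αi αj xs ys
    else match ys with
      | [] => x :: goMerge αi αj xs []
      | y :: ys' =>
        if y ∈ αj then goMerge αi αj (x :: xs) ys'
        else if y ∈ αi then y :: goMerge αi αj (x :: xs) ys'
        else x :: goMerge αi αj xs ys'
termination_by xs ys => xs.length + ys.length

private lemma go_spec (αi αj : Finset D) :
    ∀ xs ys : List D, Rrem (αi ∪ αj) xs = Rrem (αi ∪ αj) ys →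
      Rrem αi (goMerge αi αj xs ys) = Rrem αi xs ∧
      Rrem αj (goMerge αi αj xs ys) = Rrem αj ys := by
  intro xs ys
  induction xs, ys using goMerge.induct αi αj with
  | case1 ys =>
    intro h
    have hgo : goMerge αi αj [] ys = Rrem αj ys := by simp [goMerge, Rrem]
    rw [hgo]
    refine ⟨?_, rrem_rrem (le_refl αj) ys⟩
    have key : Rrem (αi ∪ αj) (Rrem αj ys) = Rrem (αi ∪ αj) ys :=
      rrem_rrem Finset.subset_union_right _
    rw [← h, rrem_nil] at key
    rw [rrem_nil]
    have hsub : Rrem αi (Rrem αj ys) = Rrem (αi ∪ αj) (Rrem αj ys) := by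
      simp only [Rrem, List.filter_filter]
      apply List.filter_congr
      intro a ha
      by_cases hj : a ∈ αj <;> by_cases hi : a ∈ αi <;> simp [Finset.mem_union, hi, hj]
    rw [hsub, key]
  | case2 x xs ys hxi ih =>
    intro h
    rw [rrem_cons_mem (Finset.mem_union_left _ hxi)] at h
    obtain ⟨h1, h2⟩ := ih h
    have hgo : goMerge αi αj (x :: xs) ys = goMerge αi αj xs ys := by
      cases ys <;> simp [goMerge, hxi]
    rw [hgo, rrem_cons_mem hxi]
    exact ⟨h1, h2⟩
  | case3 x xs ys hxi hxj ih =>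
    intro h
    rw [rrem_cons_mem (Finset.mem_union_right _ hxj)] at h
    obtain ⟨h1, h2⟩ := ih h
    have hgo : goMerge αi αj (x :: xs) ys = x :: goMerge αi αj xs ys := by
      cases ys <;> simp [goMerge, hxi, hxj]
    rw [hgo, rrem_cons_not hxi, rrem_cons_not hxi, rrem_cons_mem hxj, h1, h2]
    exact ⟨rfl, rfl⟩
  | case4 x xs hxi hxj ih =>
    intro h
    exfalso
    have hx : x ∉ αi ∪ αj := by simp [Finset.mem_union, hxi, hxj]
    rw [rrem_cons_not hx, rrem_nil] at h
    exact List.cons_ne_nil _ _ h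
  | case5 x xs hxi hxj y ys' hyj ih =>
    intro h
    rw [rrem_cons_mem (Finset.mem_union_right _ hyj)] at h
    obtain ⟨h1, h2⟩ := ih h
    have hgo : goMerge αi αj (x :: xs) (y :: ys') = goMerge αi αj (x :: xs) ys' := by
      simp [goMerge, hxi, hxj, hyj]
    rw [hgo, rrem_cons_mem hyj]
    exact ⟨h1, h2⟩
  | case6 x xs hxi hxj y ys' hyj hyi ih =>
    intro h
    rw [rrem_cons_mem (Finset.mem_union_left _ hyi)] at h
    obtain ⟨h1, h2⟩ := ih h
    have hgo : goMerge αi αj (x :: xs) (y :: ys') = y :: goMerge αi αj (x :: xs) ys' := by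
      simp [goMerge, hxi, hxj, hyj, hyi]
    rw [hgo, rrem_cons_mem hyi, rrem_cons_not hyj, rrem_cons_not hyj, h1, h2]
    exact ⟨rfl, rfl⟩
  | case7 x xs hxi hxj y ys' hyj hyi ih =>
    intro h
    have hx : x ∉ αi ∪ αj := by simp [Finset.mem_union, hxi, hxj]
    have hy : y ∉ αi ∪ αj := by simp [Finset.mem_union, hyi, hyj]
    rw [rrem_cons_not hx, rrem_cons_not hy] at h
    injection h with hxy h'
    subst hxy
    obtain ⟨h1, h2⟩ := ih h'
    have hgo : goMerge αi αj (x :: xs) (x :: ys') = x :: goMerge αi αj xs ys' := by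
      simp [goMerge, hxi, hxj, hyj, hyi]
    rw [hgo, rrem_cons_not hxi, rrem_cons_not hxi, rrem_cons_not hxj, rrem_cons_not hxj, h1, h2]
    exact ⟨rfl, rfl⟩

/-- `R_{A_{α_i},A_{α_j}} = ker (R_{¬α} ∘ P)` for `α = α_i ∪ α_j`. -/
theorem stmt8 (P : List S → List D) (hP : IsObsMap P) (αi αj : Finset D) :
    {p : List S × List S | (Ains αi (P p.1) ∩ Ains αj (P p.2)).Nonempty}
      = {p : List S × List S | Rrem (αi ∪ αj) (P p.1) = Rrem (αi ∪ αj) (P p.2)} := by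
  ext ⟨w, w'⟩
  simp only [Set.mem_setOf_eq]
  constructor
  · rintro ⟨v, hv1, hv2⟩
    have hv1 : Rrem αi (P w) = Rrem αi v := hv1
    have hv2 : Rrem αj (P w') = Rrem αj v := hv2
    calc Rrem (αi ∪ αj) (P w)
        = Rrem (αi ∪ αj) (Rrem αi (P w)) := (rrem_rrem Finset.subset_union_left _).symm
      _ = Rrem (αi ∪ αj) (Rrem αi v) := by rw [hv1]
      _ = Rrem (αi ∪ αj) v := rrem_rrem Finset.subset_union_left _
      _ = Rrem (αi ∪ αj) (Rrem αj v) := (rrem_rrem Finset.subset_union_right _).symm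
      _ = Rrem (αi ∪ αj) (Rrem αj (P w')) := by rw [hv2]
      _ = Rrem (αi ∪ αj) (P w') := rrem_rrem Finset.subset_union_right _
  · intro h
    obtain ⟨h1, h2⟩ := go_spec αi αj (P w) (P w') h
    exact ⟨goMerge αi αj (P w) (P w'), h1.symm, h2.symm⟩
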